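/- For any finite abstract simplicial complex K, scat(sd K) ≤ scat K, where sd K is the first barycentric subdivision. -/

import Mathlib

/-- An abstract simplicial complex on a vertex type `V`:
a downward-closed family of nonempty finite sets of vertices. -/
structure AbsSC (V : Type) where
  faces : Set (Finset V)
  nonempty_of_mem : ∀ σ ∈ faces, σ.Nonempty
  down_closed : ∀ σ ∈ faces, ∀ τ : Finset V, τ ⊆ σ → τ.Nonempty → τ ∈ faces

namespace AbsSC

variable {V W V' W' : Type} [DecidableEq V] [DecidableEq W]

/-- `f` is a simplicial map from `K` to `L`. -/
def IsSimplicial (K : AbsSC V) (L : AbsSC W) (f : V → W) : Prop :=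
  ∀ σ ∈ K.faces, σ.image f ∈ L.faces

/-- Two simplicial maps are contiguous. -/
def Contig (K : AbsSC V) (L : AbsSC W) (f g : V → W) : Prop :=
  IsSimplicial K L f ∧ IsSimplicial K L g ∧
    ∀ σ ∈ K.faces, σ.image f ∪ σ.image g ∈ L.faces

/-- Two maps are in the same contiguity class: they are connected by a
finite chain of pairwise contiguous simplicial maps. -/
def ContigClass (K : AbsSC V) (L : AbsSC W) : (V → W) → (V → W) → Prop :=
  Relation.ReflTransGen (Contig K L)

/-- `U` is a categorical subcomplex of `K`: the inclusion is in the
contiguity class of a constant map onto a vertex of `K`. -/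
def Categorical (K U : AbsSC V) : Prop :=
  U.faces ⊆ K.faces ∧ ∃ v : V, {v} ∈ K.faces ∧ ContigClass U K id (fun _ => v)

/-- `K` is covered by `n+1` categorical subcomplexes. -/
def CatCover (K : AbsSC V) (n : ℕ) : Prop :=
  ∃ U : Fin (n + 1) → AbsSC V, (∀ i, Categorical K (U i)) ∧
    ∀ σ ∈ K.faces, ∃ i, σ ∈ (U i).faces

/-- The simplicial Lusternik–Schnirelmann category of `K`. -/
noncomputable def scat (K : AbsSC V) : ℕ := sInf {n | CatCover K n}

/-- A maximal simplex of `K`. -/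
def MaximalFace (K : AbsSC V) (σ : Finset V) : Prop :=
  σ ∈ K.faces ∧ ∀ τ ∈ K.faces, σ ⊆ τ → σ = τ

/-- The vertex `v` is dominated (by some other vertex `v'`). -/
def Dominated (K : AbsSC V) (v : V) : Prop :=
  ∃ v' : V, v' ≠ v ∧ {v} ∈ K.faces ∧ {v'} ∈ K.faces ∧
    ∀ σ : Finset V, MaximalFace K σ → v ∈ σ → v' ∈ σ

/-- A minimal complex: no vertex is dominated. -/
def Minimal (K : AbsSC V) : Prop := ∀ v : V, ¬ Dominated K v

/-- Deleting (the open star of) a vertex. -/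
def delete (K : AbsSC V) (v : V) : AbsSC V where
  faces := {σ ∈ K.faces | v ∉ σ}
  nonempty_of_mem := fun σ h => K.nonempty_of_mem σ h.1
  down_closed := fun σ h τ hτ hne =>
    ⟨K.down_closed σ h.1 τ hτ hne, fun hv => h.2 (hτ hv)⟩

/-- An elementary strong collapse: removal of the open star of a dominated vertex. -/
def ElemStrongCollapse (K L : AbsSC V) : Prop :=
  ∃ v : V, Dominated K v ∧ L = K.delete v

/-- A complex consisting of a single vertex. -/
def IsPoint (K : AbsSC V) : Prop := ∃ v : V, K.faces = {{v}}

/-- `K` is strongly collapsible: it reduces to a single vertex by a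
sequence of elementary strong collapses. -/
def StronglyCollapsible (K : AbsSC V) : Prop :=
  ∃ L : AbsSC V, Relation.ReflTransGen ElemStrongCollapse K L ∧ IsPoint L

/-- `K` is covered by `n+1` subcomplexes, each strongly collapsible in itself. -/
def GCatCover (K : AbsSC V) (n : ℕ) : Prop :=
  ∃ U : Fin (n + 1) → AbsSC V,
    (∀ i, (U i).faces ⊆ K.faces ∧ StronglyCollapsible (U i)) ∧
    ∀ σ ∈ K.faces, ∃ i, σ ∈ (U i).faces

/-- The geometric simplicial category of `K`. -/
noncomputable def gscat (K : AbsSC V) : ℕ := sInf {n | GCatCover K n}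

/-- Strong homotopy equivalence of complexes. -/
def StrongEquiv (K : AbsSC V) (L : AbsSC W) : Prop :=
  ∃ (φ : V → W) (ψ : W → V), IsSimplicial K L φ ∧ IsSimplicial L K ψ ∧
    ContigClass K K (ψ ∘ φ) id ∧ ContigClass L L (φ ∘ ψ) id

/-- The barycentric subdivision: vertices are the simplices of `K`,
simplices are the chains of simplices of `K`. -/
def sd (K : AbsSC V) : AbsSC (Finset V) where
  faces := {S | S.Nonempty ∧ (∀ σ ∈ S, σ ∈ K.faces) ∧
    ∀ σ ∈ S, ∀ τ ∈ S, σ ⊆ τ ∨ τ ⊆ σ}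
  nonempty_of_mem := fun S hS => hS.1
  down_closed := fun S hS T hTS hT =>
    ⟨hT, fun σ hσ => hS.2.1 σ (hTS hσ),
      fun σ hσ τ hτ => hS.2.2 σ (hTS hσ) τ (hTS hτ)⟩

/-- The categorical product of simplicial complexes. -/
def prod (K : AbsSC V) (L : AbsSC W) : AbsSC (V × W) where
  faces := {σ | σ.Nonempty ∧ σ.image Prod.fst ∈ K.faces ∧ σ.image Prod.snd ∈ L.faces}
  nonempty_of_mem := fun σ h => h.1
  down_closed := fun σ h τ hτ hne =>
    ⟨hne, K.down_closed _ h.2.1 _ (Finset.image_subset_image hτ) (hne.image _),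
      L.down_closed _ h.2.2 _ (Finset.image_subset_image hτ) (hne.image _)⟩

/-- The `n`-fold categorical power of `K`. -/
def power (K : AbsSC V) (n : ℕ) : AbsSC (Fin n → V) where
  faces := {σ | σ.Nonempty ∧ ∀ j : Fin n, σ.image (fun f => f j) ∈ K.faces}
  nonempty_of_mem := fun σ h => h.1
  down_closed := by
    intro σ h τ hτ hne
    exact ⟨hne, fun j => K.down_closed _ (h.2 j) _ (Finset.image_subset_image hτ) (hne.image _)⟩

/-- The `n`-th fat wedge of a pointed complex `(K, v₀)` inside `Kⁿ`. -/
def fatWedge (K : AbsSC V) (n : ℕ) (v₀ : V) : AbsSC (Fin n → V) where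
  faces := {σ | σ ∈ (K.power n).faces ∧ ∃ j : Fin n, ∀ f ∈ σ, f j = v₀}
  nonempty_of_mem := fun σ h => (K.power n).nonempty_of_mem σ h.1
  down_closed := fun σ h τ hτ hne =>
    ⟨(K.power n).down_closed σ h.1 τ hτ hne,
      h.2.imp fun j hj f hf => hj f (hτ hf)⟩

/-- The part of a set of vertices of a disjoint union lying in the left factor. -/
noncomputable def sumLeft (σ : Finset (V ⊕ W)) : Finset V :=
  σ.preimage Sum.inl Sum.inl_injective.injOn

/-- The part of a set of vertices of a disjoint union lying in the right factor. -/
noncomputable def sumRight (σ : Finset (V ⊕ W)) : Finset W :=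
  σ.preimage Sum.inr Sum.inr_injective.injOn

/-- The simplicial join `K ∗ L`. -/
def join (K : AbsSC V) (L : AbsSC W) : AbsSC (V ⊕ W) where
  faces := {σ | σ.Nonempty ∧ ((sumLeft σ).Nonempty → sumLeft σ ∈ K.faces) ∧
    ((sumRight σ).Nonempty → sumRight σ ∈ L.faces)}
  nonempty_of_mem := fun σ h => h.1
  down_closed := by
    intro σ h τ hτ hne
    have hl : sumLeft τ ⊆ sumLeft σ := fun x hx => by
      rw [sumLeft, Finset.mem_preimage] at *; exact hτ hx
    have hr : sumRight τ ⊆ sumRight σ := fun x hx => by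
      rw [sumRight, Finset.mem_preimage] at *; exact hτ hx
    exact ⟨hne,
      fun h1 => K.down_closed _ (h.2.1 (h1.mono hl)) _ hl h1,
      fun h1 => L.down_closed _ (h.2.2 (h1.mono hr)) _ hr h1⟩

/-- A graph: a simplicial complex of dimension at most 1. -/
def IsGraph (G : AbsSC V) : Prop := ∀ σ ∈ G.faces, σ.card ≤ 2

/-- A connected (nonempty) complex: any two vertices are joined by an edge path. -/
def ConnectedG (G : AbsSC V) : Prop :=
  G.faces.Nonempty ∧
    ∀ u v : V, {u} ∈ G.faces → {v} ∈ G.faces →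
      ∃ (n : ℕ) (p : Fin (n + 1) → V), p 0 = u ∧ p (Fin.last n) = v ∧
        ∀ i : Fin n, ({p i.castSucc, p i.succ} : Finset V) ∈ G.faces

/-- A cycle of length `n` in a graph: `n ≥ 3` distinct vertices joined cyclically by edges. -/
def IsCycle (G : AbsSC V) (n : ℕ) (p : ZMod n → V) : Prop :=
  3 ≤ n ∧ Function.Injective p ∧
    ∀ i : ZMod n, ({p i, p (i + 1)} : Finset V) ∈ G.faces

/-- A forest: a graph containing no cycle. -/
def IsForest (G : AbsSC V) : Prop := ∀ (n : ℕ) (p : ZMod n → V), ¬ IsCycle G n p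

/-- A tree: a connected forest. -/
def IsTree (G : AbsSC V) : Prop := IsForest G ∧ ConnectedG G

/-- A decomposition of a graph into `k` edge-disjoint spanning forests. -/
def EdgeDisjointForestDecomp (G : AbsSC V) (k : ℕ) : Prop :=
  ∃ F : Fin k → AbsSC V,
    (∀ i, (F i).faces ⊆ G.faces ∧ IsForest (F i) ∧
      ∀ v : V, {v} ∈ G.faces → {v} ∈ (F i).faces) ∧
    (∀ σ ∈ G.faces, ∃ i, σ ∈ (F i).faces) ∧
    ∀ (i j : Fin k) (σ : Finset V), σ.card = 2 →
      σ ∈ (F i).faces → σ ∈ (F j).faces → i = j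

/-- The arboricity of a graph. -/
noncomputable def arboricity (G : AbsSC V) : ℕ :=
  sInf {k | EdgeDisjointForestDecomp G k}

end AbsSC

/-!
A contiguity `f ~ g` of simplicial maps `U → K` induces a chain of contiguities from
`sd f = (σ ↦ f σ)` to `σ ↦ f σ ∪ g σ`, switching the simplices to `f σ ∪ g σ` one cardinality at
a time, largest first (`sdInterp`): consecutive maps differ only on simplices with exactly `k`
vertices, and no chain contains two of these. As `σ ↦ f σ ∪ g σ` is symmetric in `f, g`, the maps
`sd f` and `sd g` lie in one contiguity class, so `sd` of a categorical subcomplex is categorical.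
A chain of simplices of `K` lies in `sd U` for any subcomplex `U` containing its largest element,
so `sd` turns a categorical cover of `K` into one of `sd K`.
-/

namespace AbsSC

variable {V W : Type} [DecidableEq W]

section Contiguity

variable {K : AbsSC V} {L : AbsSC W} {f g : V → W}

theorem Contig.symm (h : Contig K L f g) : Contig K L g f :=
  ⟨h.2.1, h.1, fun σ hσ => Finset.union_comm (σ.image f) (σ.image g) ▸ h.2.2 σ hσ⟩

theorem ContigClass.symm (h : ContigClass K L f g) : ContigClass K L g f :=
  haveI : Std.Symm (Contig K L) := ⟨fun _ _ => Contig.symm⟩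
  Std.Symm.symm (r := Relation.ReflTransGen (Contig K L)) _ _ h

theorem contig_of_image_eq (hg : IsSimplicial K L g)
    (h : ∀ σ ∈ K.faces, σ.image f = σ.image g) : Contig K L f g :=
  ⟨fun σ hσ => h σ hσ ▸ hg σ hσ, hg, fun σ hσ => by rw [h σ hσ, Finset.union_self]; exact hg σ hσ⟩

theorem isSimplicial_const {v : W} (hv : {v} ∈ L.faces) : IsSimplicial K L fun _ => v :=
  fun σ hσ => Finset.image_const (K.nonempty_of_mem σ hσ) v ▸ hv

end Contiguity

section Subdivision

variable {U K : AbsSC V} {L : AbsSC W}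

theorem singleton_mem_sd {σ : Finset V} (hσ : σ ∈ K.faces) : {σ} ∈ (sd K).faces :=
  ⟨Finset.singleton_nonempty σ, by simpa using hσ, by simp⟩

theorem faces_nonempty_of_sd (h : (sd K).faces.Nonempty) : K.faces.Nonempty := by
  obtain ⟨S, hS⟩ := h
  obtain ⟨σ, hσ⟩ := hS.1
  exact ⟨σ, hS.2.1 σ hσ⟩

theorem sd_faces_mono (h : U.faces ⊆ K.faces) : (sd U).faces ⊆ (sd K).faces :=
  fun _ ⟨hne, hmem, hchain⟩ => ⟨hne, fun σ hσ => h (hmem σ hσ), hchain⟩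

theorem exists_greatest_of_mem_sd {S : Finset (Finset V)} (hS : S ∈ (sd K).faces) :
    ∃ τ ∈ S, ∀ σ ∈ S, σ ⊆ τ := by
  obtain ⟨τ, hτS, hτmax⟩ := S.exists_max_image Finset.card hS.1
  refine ⟨τ, hτS, fun σ hσS => ?_⟩
  rcases hS.2.2 σ hσS τ hτS with h | h
  · exact h
  · exact (Finset.eq_of_subset_of_card_le h (hτmax σ hσS)).ge

theorem mem_sd_of_subset_mem {S : Finset (Finset V)} (hS : S ∈ (sd K).faces) {τ : Finset V}
    (hτ : τ ∈ U.faces) (hSτ : ∀ σ ∈ S, σ ⊆ τ) : S ∈ (sd U).faces :=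
  ⟨hS.1, fun σ hσ => U.down_closed τ hτ σ (hSτ σ hσ) (K.nonempty_of_mem σ (hS.2.1 σ hσ)), hS.2.2⟩

theorem isSimplicial_sd_of_monotone {F : Finset V → Finset W}
    (hF : ∀ σ ∈ U.faces, F σ ∈ L.faces) (hmono : Monotone F) :
    IsSimplicial (sd U) (sd L) F := by
  rintro S ⟨hne, hmem, hchain⟩
  refine ⟨hne.image F, ?_, ?_⟩
  · simp only [Finset.mem_image, forall_exists_index, and_imp, forall_apply_eq_imp_iff₂]
    exact fun σ hσ => hF σ (hmem σ hσ)
  · simp only [Finset.mem_image, forall_exists_index, and_imp, forall_apply_eq_imp_iff₂]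
    exact fun σ hσ τ hτ => (hchain σ hσ τ hτ).imp (@hmono σ τ) (@hmono τ σ)

theorem contig_sd_of_le {F G : Finset V → Finset W}
    (hF : ∀ σ ∈ U.faces, F σ ∈ L.faces) (hG : ∀ σ ∈ U.faces, G σ ∈ L.faces)
    (hFmono : Monotone F) (hGmono : Monotone G) (hFG : F ≤ G)
    (hcross : ∀ σ τ, σ ⊆ τ → G σ ⊆ F τ ∨ F τ ⊆ G σ) :
    Contig (sd U) (sd L) F G := by
  have hsF := isSimplicial_sd_of_monotone hF hFmono
  have hsG := isSimplicial_sd_of_monotone hG hGmono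
  refine ⟨hsF, hsG, fun S hS => ⟨(hS.1.image F).mono Finset.subset_union_left, ?_, ?_⟩⟩
  · intro ρ hρ
    rcases Finset.mem_union.1 hρ with h | h
    exacts [(hsF S hS).2.1 ρ h, (hsG S hS).2.1 ρ h]
  · have hFG_chain : ∀ σ ∈ S, ∀ τ ∈ S, F σ ⊆ G τ ∨ G τ ⊆ F σ := by
      intro σ hσ τ hτ
      rcases hS.2.2 σ hσ τ hτ with h | h
      · exact Or.inl ((hFmono h).trans (hFG τ))
      · exact (hcross τ σ h).symm
    intro x hx y hy
    rcases Finset.mem_union.1 hx with hx | hx <;> rcases Finset.mem_union.1 hy with hy | hy <;>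
      obtain ⟨σ, hσ, rfl⟩ := Finset.mem_image.1 hx <;>
      obtain ⟨τ, hτ, rfl⟩ := Finset.mem_image.1 hy
    · exact (hsF S hS).2.2 _ (Finset.mem_image_of_mem F hσ) _ (Finset.mem_image_of_mem F hτ)
    · exact hFG_chain σ hσ τ hτ
    · exact (hFG_chain τ hτ σ hσ).symm
    · exact (hsG S hS).2.2 _ (Finset.mem_image_of_mem G hσ) _ (Finset.mem_image_of_mem G hτ)

end Subdivision

section Interpolation

def sdInterp (f g : V → W) (k : ℕ) (σ : Finset V) : Finset W :=
  if k ≤ σ.card then σ.image f ∪ σ.image g else σ.image f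

variable (f g : V → W)

theorem sdInterp_zero : sdInterp f g 0 = sdInterp g f 0 := by
  funext σ
  simp only [sdInterp, Nat.zero_le, if_true, Finset.union_comm]

theorem sdInterp_of_card_lt {k : ℕ} {σ : Finset V} (h : σ.card < k) :
    sdInterp f g k σ = σ.image f := if_neg (Nat.not_le.2 h)

theorem image_subset_sdInterp (k : ℕ) {σ τ : Finset V} (h : σ ⊆ τ) :
    σ.image f ⊆ sdInterp f g k τ := by
  unfold sdInterp
  split
  · exact (Finset.image_subset_image h).trans Finset.subset_union_left
  · exact Finset.image_subset_image h

theorem monotone_sdInterp (k : ℕ) : Monotone (sdInterp f g k) := by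
  intro σ τ h
  by_cases hk : k ≤ σ.card
  · rw [sdInterp, sdInterp, if_pos hk, if_pos (hk.trans (Finset.card_le_card h))]
    exact Finset.union_subset_union (Finset.image_subset_image h) (Finset.image_subset_image h)
  · rw [sdInterp, if_neg hk]
    exact image_subset_sdInterp f g k h

theorem sdInterp_succ_le (k : ℕ) : sdInterp f g (k + 1) ≤ sdInterp f g k := by
  intro σ
  by_cases hk : k + 1 ≤ σ.card
  · rw [sdInterp, sdInterp, if_pos hk, if_pos (Nat.le_of_succ_le hk)]
  · rw [sdInterp, if_neg hk]
    exact image_subset_sdInterp f g k subset_rfl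

theorem sdInterp_comparable (k : ℕ) {σ τ : Finset V} (h : σ ⊆ τ) :
    sdInterp f g k σ ⊆ sdInterp f g (k + 1) τ ∨ sdInterp f g (k + 1) τ ⊆ sdInterp f g k σ := by
  rcases h.eq_or_ssubset with rfl | hlt
  · exact Or.inr (sdInterp_succ_le f g k σ)
  left
  by_cases hk : k ≤ σ.card
  · have hk' : k + 1 ≤ τ.card := hk.trans_lt (Finset.card_lt_card hlt)
    rw [sdInterp, sdInterp, if_pos hk, if_pos hk']
    exact Finset.union_subset_union (Finset.image_subset_image h) (Finset.image_subset_image h)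
  · rw [sdInterp, if_neg hk]
    exact image_subset_sdInterp f g (k + 1) h

variable {U : AbsSC V} {L : AbsSC W} {f g}

theorem sdInterp_mem_faces (hfg : Contig U L f g) (k : ℕ) {σ : Finset V} (hσ : σ ∈ U.faces) :
    sdInterp f g k σ ∈ L.faces := by
  unfold sdInterp
  split
  exacts [hfg.2.2 σ hσ, hfg.1 σ hσ]

theorem contig_sdInterp_succ (hfg : Contig U L f g) (k : ℕ) :
    Contig (sd U) (sd L) (sdInterp f g (k + 1)) (sdInterp f g k) :=
  contig_sd_of_le (fun _ => sdInterp_mem_faces hfg _) (fun _ => sdInterp_mem_faces hfg _)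
    (monotone_sdInterp f g _) (monotone_sdInterp f g _) (sdInterp_succ_le f g k)
    (fun _ _ => sdInterp_comparable f g k)

theorem contigClass_sdInterp (hfg : Contig U L f g) (k : ℕ) :
    ContigClass (sd U) (sd L) (sdInterp f g k) (sdInterp f g 0) := by
  induction k with
  | zero => exact Relation.ReflTransGen.refl
  | succ k ih => exact Relation.ReflTransGen.head (contig_sdInterp_succ hfg k) ih

theorem image_eq_sdInterp [Fintype V] (f g : V → W) :
    Finset.image f = sdInterp f g (Fintype.card V + 1) :=
  funext fun σ => (sdInterp_of_card_lt f g (Nat.lt_succ_of_le (Finset.card_le_univ σ))).symm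

theorem Contig.contigClass_sd [Fintype V] (hfg : Contig U L f g) :
    ContigClass (sd U) (sd L) (Finset.image f) (Finset.image g) := by
  have hf := contigClass_sdInterp hfg (Fintype.card V + 1)
  have hg := contigClass_sdInterp hfg.symm (Fintype.card V + 1)
  rw [← image_eq_sdInterp] at hf hg
  rw [sdInterp_zero] at hf
  exact hf.trans hg.symm

theorem ContigClass.sd [Fintype V] (h : ContigClass U L f g) :
    ContigClass (sd U) (sd L) (Finset.image f) (Finset.image g) :=
  Relation.ReflTransGen.lift' Finset.image (fun _ _ => Contig.contigClass_sd) f g h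

end Interpolation

section Cover

variable [DecidableEq V] {K : AbsSC V}

theorem CatCover.faces_nonempty {n : ℕ} (h : CatCover K n) : K.faces.Nonempty := by
  obtain ⟨U, hcat, -⟩ := h
  obtain ⟨-, v, hv, -⟩ := hcat 0
  exact ⟨_, hv⟩

theorem scat_le_scat_of_catCover_imp {L : AbsSC W} (hcover : ∀ n, CatCover K n → CatCover L n)
    (hexists : (∃ n, CatCover L n) → ∃ n, CatCover K n) : scat L ≤ scat K := by
  by_cases hK : ∃ n, CatCover K n
  · exact Nat.sInf_le (hcover _ (Nat.sInf_mem hK))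
  · have hL : {n | CatCover L n} = ∅ :=
      Set.eq_empty_of_forall_notMem fun n hn => hK (hexists ⟨n, hn⟩)
    simp only [scat, hL, Nat.sInf_empty, Nat.zero_le]

theorem exists_catCover_of_cover {ι : Type*} [Finite ι] [Nonempty ι] (U : ι → AbsSC V)
    (hcat : ∀ i, Categorical K (U i)) (hcov : ∀ σ ∈ K.faces, ∃ i, σ ∈ (U i).faces) :
    ∃ n, CatCover K n := by
  obtain ⟨n, ⟨e⟩⟩ := Finite.exists_equiv_fin ι
  obtain ⟨m, rfl⟩ : ∃ m, n = m + 1 :=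
    Nat.exists_eq_succ_of_ne_zero fun hn => (hn ▸ e (Classical.arbitrary ι)).elim0
  refine ⟨m, U ∘ e.symm, fun i => hcat _, fun σ hσ => ?_⟩
  obtain ⟨i, hi⟩ := hcov σ hσ
  exact ⟨e i, by simpa using hi⟩

def closedSimplex (K : AbsSC V) (τ : Finset V) : AbsSC V where
  faces := {σ | σ ∈ K.faces ∧ σ ⊆ τ}
  nonempty_of_mem σ h := K.nonempty_of_mem σ h.1
  down_closed σ h ρ hρ hne := ⟨K.down_closed σ h.1 ρ hρ hne, hρ.trans h.2⟩

/-- The inclusion is contiguous to the constant map at any vertex `v ∈ τ`, since `σ ∪ {v} ⊆ τ`. -/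
theorem categorical_closedSimplex {τ : Finset V} (hτ : τ ∈ K.faces) :
    Categorical K (K.closedSimplex τ) := by
  obtain ⟨v, hv⟩ := K.nonempty_of_mem τ hτ
  have hvτ : {v} ⊆ τ := Finset.singleton_subset_iff.2 hv
  have hvK : {v} ∈ K.faces := K.down_closed τ hτ {v} hvτ (Finset.singleton_nonempty v)
  refine ⟨fun σ h => h.1, v, hvK, Relation.ReflTransGen.single ⟨?_, isSimplicial_const hvK, ?_⟩⟩
  · intro σ hσ
    rw [Finset.image_id]
    exact hσ.1
  · intro σ hσ
    rw [Finset.image_id, Finset.image_const (K.nonempty_of_mem σ hσ.1)]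
    exact K.down_closed τ hτ _ (Finset.union_subset hσ.2 hvτ)
      ((K.nonempty_of_mem σ hσ.1).mono Finset.subset_union_left)

theorem exists_catCover [Fintype V] (hK : K.faces.Nonempty) : ∃ n, CatCover K n :=
  have : Nonempty K.faces := hK.to_subtype
  exists_catCover_of_cover (fun τ : K.faces => K.closedSimplex τ)
    (fun τ => categorical_closedSimplex τ.2) fun σ hσ => ⟨⟨σ, hσ⟩, hσ, subset_rfl⟩

end Cover

variable [DecidableEq V] [Fintype V] {K U : AbsSC V}

theorem Categorical.sd (h : Categorical K U) : Categorical (sd K) (sd U) := by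
  obtain ⟨hsub, v, hv, hcc⟩ := h
  refine ⟨sd_faces_mono hsub, {v}, singleton_mem_sd hv, ?_⟩
  have himage := hcc.sd
  rw [show Finset.image (id : V → V) = id from funext fun _ => Finset.image_id] at himage
  refine himage.tail (contig_of_image_eq (isSimplicial_const (singleton_mem_sd hv)) ?_)
  intro S hS
  refine Finset.image_congr fun σ hσ => ?_
  exact Finset.image_const (U.nonempty_of_mem σ (hS.2.1 σ hσ)) v

theorem CatCover.sd {n : ℕ} (h : CatCover K n) : CatCover (sd K) n := by
  obtain ⟨U, hcat, hcov⟩ := h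
  refine ⟨fun i => AbsSC.sd (U i), fun i => (hcat i).sd, fun S hS => ?_⟩
  obtain ⟨τ, hτS, hτmax⟩ := exists_greatest_of_mem_sd hS
  obtain ⟨i, hi⟩ := hcov τ (hS.2.1 τ hτS)
  exact ⟨i, mem_sd_of_subset_mem hS hi hτmax⟩

end AbsSC

/-- `scat (sd K) ≤ scat K`. -/
theorem scat_sd_le {V : Type} [DecidableEq V] [Fintype V] (K : AbsSC V) :
    AbsSC.scat (AbsSC.sd K) ≤ AbsSC.scat K :=
  AbsSC.scat_le_scat_of_catCover_imp (fun _ => AbsSC.CatCover.sd) fun ⟨_, h⟩ =>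
    AbsSC.exists_catCover (AbsSC.faces_nonempty_of_sd h.faces_nonempty)
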